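/- Suppose p ≥ 1 and p·S₀^{1−q}·(μ − β·S₀^q·I₀^{p−1}) > (1−q)·β·I₀^p. Then I(t) → 0 as t → ∞ and there exists a constant S* > 0 such that S(t) → S* as t → ∞. -/

import Mathlib

/-!
`S` is nonincreasing, so the per-capita growth rate `β S^q I^(p-1) - μ` of `I` is at most
`β S₀^q I^(p-1) - μ`, which is negative while `I` stays slightly above `I₀` (here `p ≥ 1` is
used). A barrier argument therefore makes `I` nonincreasing, hence `I' ≤ -δ I` with
`δ = μ - β S₀^q I₀^(p-1) > 0`, and `I` decays exponentially.

For `S`, the Lyapunov function `S^(1-q) - K I^p` with `K = (1-q) β / (p δ)` is nondecreasing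
while `S > 0`: the loss `(S^(1-q))' = -(1-q) β I^p` is compensated by `-K (I^p)' ≥ K p δ I^p`.
The hypothesis says exactly that it starts positive, so `S^(1-q)` stays above a positive
constant; in particular `S` never vanishes and its decreasing limit is positive.
-/

open Filter Topology Set Real

theorem lt_of_forall_Ico_lt {f : ℝ → ℝ} {a M : ℝ} (hf : ContinuousOn f (Ici a)) (ha : f a < M)
    (hstep : ∀ b, a < b → (∀ s ∈ Ico a b, f s < M) → f b < M) {t : ℝ} (ht : a ≤ t) :
    f t < M := by
  by_contra! hMt
  set A := Icc a t ∩ f ⁻¹' Ici M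
  have hA : IsClosed A :=
    (hf.mono Icc_subset_Ici_self).preimage_isClosed_of_isClosed isClosed_Icc isClosed_Ici
  have hbdd : BddBelow A := ⟨a, fun s hs => hs.1.1⟩
  have hmem : sInf A ∈ A := hA.csInf_mem ⟨t, ⟨ht, le_rfl⟩, hMt⟩ hbdd
  have hlt : a < sInf A := hmem.1.1.lt_of_ne fun h => (h ▸ hmem.2 : M ≤ f a).not_gt ha
  refine (hstep _ hlt fun s hs => ?_).not_ge hmem.2
  by_contra! hs'
  exact hs.2.not_ge (csInf_le hbdd ⟨⟨hs.1, hs.2.le.trans hmem.1.2⟩, hs'⟩)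

theorem antitoneOn_Ici_of_hasDerivAt_nonpos {f f' : ℝ → ℝ} {a : ℝ} (hf : ContinuousOn f (Ici a))
    (hderiv : ∀ t, a < t → HasDerivAt f (f' t) t) (hf' : ∀ t, a < t → f' t ≤ 0) :
    AntitoneOn f (Ici a) :=
  antitoneOn_of_hasDerivWithinAt_nonpos (convex_Ici a) hf
    (fun t ht => (hderiv t (by rwa [interior_Ici] at ht)).hasDerivWithinAt)
    (fun t ht => hf' t (by rwa [interior_Ici] at ht))

theorem le_mul_exp_of_hasDerivAt_le {f f' : ℝ → ℝ} {a k : ℝ} (hf : ContinuousOn f (Ici a))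
    (hderiv : ∀ t, a < t → HasDerivAt f (f' t) t) (hle : ∀ t, a < t → f' t ≤ k * f t)
    {t : ℝ} (ht : a ≤ t) : f t ≤ f a * exp (k * (t - a)) := by
  have hexp : ∀ s, HasDerivAt (fun s => exp (-(k * (s - a)))) (exp (-(k * (s - a))) * -k) s :=
    fun s => by simpa using (((hasDerivAt_id s).sub_const a).const_mul k).neg.exp
  have hanti : AntitoneOn (fun s => f s * exp (-(k * (s - a)))) (Ici a) := by
    refine antitoneOn_Ici_of_hasDerivAt_nonpos (hf.mul (by fun_prop))
      (fun s hs => (hderiv s hs).mul (hexp s)) (fun s hs => ?_)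
    have := hle s hs
    have := exp_pos (-(k * (s - a)))
    nlinarith
  have h := hanti self_mem_Ici ht ht
  simp only [sub_self, mul_zero, neg_zero, exp_zero, mul_one] at h
  calc f t = f t * exp (-(k * (t - a))) * exp (k * (t - a)) := by
        rw [mul_assoc, ← exp_add, neg_add_cancel, exp_zero, mul_one]
    _ ≤ f a * exp (k * (t - a)) := by gcongr

theorem exists_tendsto_of_antitoneOn_Ici {f : ℝ → ℝ} {a : ℝ} (hf : AntitoneOn f (Ici a))
    (hbdd : BddBelow (f '' Ici a)) : ∃ L, Tendsto f atTop (𝓝 L) := by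
  have hmax : ∀ t, max t a ∈ Ici a := fun t => le_max_right t a
  have hanti : Antitone fun t => f (max t a) := fun s t hst =>
    hf (hmax s) (hmax t) (max_le_max_right a hst)
  have hbdd' : BddBelow (range fun t => f (max t a)) :=
    hbdd.mono (range_subset_iff.2 fun t => mem_image_of_mem f (hmax t))
  refine ⟨_, (tendsto_atTop_ciInf hanti hbdd').congr' ?_⟩
  filter_upwards [eventually_ge_atTop a] with t ht
  rw [max_eq_left ht]

structure IsSISolution (β μ p q : ℝ) (S I : ℝ → ℝ) : Prop where
  continuousOn_S : ContinuousOn S (Ici 0)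
  continuousOn_I : ContinuousOn I (Ici 0)
  S_nonneg : ∀ t, 0 ≤ t → 0 ≤ S t
  I_pos : ∀ t, 0 ≤ t → 0 < I t
  hasDerivAt_S : ∀ t, 0 < t → HasDerivAt S (-(β * S t ^ q * I t ^ p)) t
  hasDerivAt_I : ∀ t, 0 < t → HasDerivAt I (β * S t ^ q * I t ^ p - μ * I t) t

namespace IsSISolution

variable {β μ p q : ℝ} {S I : ℝ → ℝ}

theorem antitoneOn_S (h : IsSISolution β μ p q S I) (hβ : 0 ≤ β) : AntitoneOn S (Ici 0) := by
  refine antitoneOn_Ici_of_hasDerivAt_nonpos h.continuousOn_S h.hasDerivAt_S fun t ht => ?_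
  have := rpow_nonneg (h.S_nonneg t ht.le) q
  have := rpow_nonneg (h.I_pos t ht.le).le p
  simp only [Left.neg_nonpos_iff]
  positivity

theorem S_le (h : IsSISolution β μ p q S I) (hβ : 0 ≤ β) {t : ℝ} (ht : 0 ≤ t) : S t ≤ S 0 :=
  h.antitoneOn_S hβ self_mem_Ici ht ht

theorem rate_I_le (h : IsSISolution β μ p q S I) (hβ : 0 ≤ β) (hq : 0 ≤ q) (hp : 1 ≤ p)
    {t M : ℝ} (ht : 0 < t) (hIM : I t ≤ M) :
    β * S t ^ q * I t ^ p - μ * I t ≤ (β * S 0 ^ q * M ^ (p - 1) - μ) * I t := by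
  have hI := h.I_pos t ht.le
  have hS := h.S_nonneg t ht.le
  have hsplit : I t ^ p = I t ^ (p - 1) * I t := by
    rw [rpow_sub_one hI.ne', div_mul_cancel₀ _ hI.ne']
  have hcoef : β * S t ^ q * I t ^ (p - 1) ≤ β * S 0 ^ q * M ^ (p - 1) := by
    have hpow : 0 ≤ p - 1 := by linarith
    have hSq : S t ^ q ≤ S 0 ^ q := rpow_le_rpow hS (h.S_le hβ ht.le) hq
    have hIp : I t ^ (p - 1) ≤ M ^ (p - 1) := rpow_le_rpow hI.le hIM hpow
    exact mul_le_mul (mul_le_mul_of_nonneg_left hSq hβ) hIp (rpow_nonneg hI.le _)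
      (mul_nonneg hβ (rpow_nonneg (h.S_nonneg 0 le_rfl) q))
  rw [hsplit]
  nlinarith

theorem I_lt (h : IsSISolution β μ p q S I) (hβ : 0 ≤ β) (hq : 0 ≤ q) (hp : 1 ≤ p) {M : ℝ}
    (hM : I 0 < M) (hMμ : β * S 0 ^ q * M ^ (p - 1) < μ) {t : ℝ} (ht : 0 ≤ t) : I t < M := by
  refine lt_of_forall_Ico_lt h.continuousOn_I hM (fun b hb hlt => ?_) ht
  have hanti : StrictAntiOn I (Icc 0 b) := by
    refine strictAntiOn_of_hasDerivWithinAt_neg (f' := fun s => β * S s ^ q * I s ^ p - μ * I s)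
      (convex_Icc 0 b) (h.continuousOn_I.mono Icc_subset_Ici_self) (fun s hs => ?_)
      (fun s hs => ?_) <;> rw [interior_Icc] at hs
    · exact (h.hasDerivAt_I s hs.1).hasDerivWithinAt
    · have := h.rate_I_le hβ hq hp hs.1 (hlt s ⟨hs.1.le, hs.2⟩).le
      have := h.I_pos s hs.1.le
      nlinarith
  exact (hanti (left_mem_Icc.2 hb.le) (right_mem_Icc.2 hb.le) hb).trans hM

/-- A barrier slightly above `I 0`, from `I_lt`, keeps the growth rate of `I` negative. -/
theorem antitoneOn_I (h : IsSISolution β μ p q S I) (hβ : 0 ≤ β) (hq : 0 ≤ q) (hp : 1 ≤ p)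
    (hμ : β * S 0 ^ q * I 0 ^ (p - 1) < μ) : AntitoneOn I (Ici 0) := by
  have hcont : ContinuousAt (fun M => β * S 0 ^ q * M ^ (p - 1)) (I 0) :=
    continuousAt_const.mul (continuousAt_rpow_const _ _ (Or.inl (h.I_pos 0 le_rfl).ne'))
  obtain ⟨M, hMμ, hIM⟩ := ((hcont.eventually (gt_mem_nhds hμ)).filter_mono nhdsWithin_le_nhds
    |>.and (self_mem_nhdsWithin (s := Ioi (I 0)))).exists
  refine antitoneOn_Ici_of_hasDerivAt_nonpos h.continuousOn_I h.hasDerivAt_I fun t ht => ?_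
  have := h.rate_I_le hβ hq hp ht (h.I_lt hβ hq hp hIM hMμ ht.le).le
  have := h.I_pos t ht.le
  nlinarith

theorem rate_I_le_of_lt (h : IsSISolution β μ p q S I) (hβ : 0 ≤ β) (hq : 0 ≤ q) (hp : 1 ≤ p)
    (hμ : β * S 0 ^ q * I 0 ^ (p - 1) < μ) {t : ℝ} (ht : 0 < t) :
    β * S t ^ q * I t ^ p - μ * I t ≤ (β * S 0 ^ q * I 0 ^ (p - 1) - μ) * I t :=
  h.rate_I_le hβ hq hp ht (h.antitoneOn_I hβ hq hp hμ self_mem_Ici ht.le ht.le)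

theorem I_le_mul_exp (h : IsSISolution β μ p q S I) (hβ : 0 ≤ β) (hq : 0 ≤ q) (hp : 1 ≤ p)
    (hμ : β * S 0 ^ q * I 0 ^ (p - 1) < μ) {t : ℝ} (ht : 0 ≤ t) :
    I t ≤ I 0 * exp ((β * S 0 ^ q * I 0 ^ (p - 1) - μ) * t) := by
  simpa using le_mul_exp_of_hasDerivAt_le h.continuousOn_I h.hasDerivAt_I
    (fun s hs => h.rate_I_le_of_lt hβ hq hp hμ hs) ht

theorem tendsto_I_zero (h : IsSISolution β μ p q S I) (hβ : 0 ≤ β) (hq : 0 ≤ q) (hp : 1 ≤ p)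
    (hμ : β * S 0 ^ q * I 0 ^ (p - 1) < μ) : Tendsto I atTop (𝓝 0) := by
  have hexp : Tendsto (fun t => I 0 * exp ((β * S 0 ^ q * I 0 ^ (p - 1) - μ) * t)) atTop (𝓝 0) := by
    simpa using (tendsto_exp_atBot.comp
      (tendsto_id.const_mul_atTop_of_neg (sub_neg.2 hμ))).const_mul (I 0)
  refine tendsto_of_tendsto_of_tendsto_of_le_of_le' tendsto_const_nhds hexp ?_ ?_ <;>
    filter_upwards [eventually_ge_atTop 0] with t ht
  exacts [(h.I_pos t ht).le, h.I_le_mul_exp hβ hq hp hμ ht]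

theorem monotoneOn_lyapunov (h : IsSISolution β μ p q S I) (hβ : 0 ≤ β) (hq : 0 ≤ q)
    (hq1 : q ≤ 1) (hp : 1 ≤ p) (hμ : β * S 0 ^ q * I 0 ^ (p - 1) < μ) {K : ℝ}
    (hK : (1 - q) * β ≤ K * (p * (μ - β * S 0 ^ q * I 0 ^ (p - 1)))) {b : ℝ}
    (hS : ∀ t ∈ Ioo 0 b, 0 < S t) :
    MonotoneOn (fun t => S t ^ (1 - q) - K * I t ^ p) (Icc 0 b) := by
  have hK0 : 0 ≤ K := (mul_nonneg_iff_of_pos_right (by nlinarith)).1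
    ((mul_nonneg (sub_nonneg.2 hq1) hβ).trans hK)
  refine monotoneOn_of_hasDerivWithinAt_nonneg (f' := fun t =>
      -(β * S t ^ q * I t ^ p) * (1 - q) * S t ^ (1 - q - 1) -
        K * ((β * S t ^ q * I t ^ p - μ * I t) * p * I t ^ (p - 1)))
    (convex_Icc 0 b) ?_ (fun t ht => ?_) (fun t ht => ?_)
  · exact ((h.continuousOn_S.mono Icc_subset_Ici_self).rpow_const
      fun _ _ => Or.inr (sub_nonneg.2 hq1)).sub (continuousOn_const.mul
      ((h.continuousOn_I.mono Icc_subset_Ici_self).rpow_const fun _ _ => Or.inr (by linarith)))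
  all_goals rw [interior_Icc] at ht
  · exact (((h.hasDerivAt_S t ht.1).rpow_const (Or.inl (hS t ht).ne')).sub
      (((h.hasDerivAt_I t ht.1).rpow_const (Or.inl (h.I_pos t ht.1.le).ne')).const_mul K))
      |>.hasDerivWithinAt
  · have hI := h.I_pos t ht.1.le
    have hSq : S t ^ q * S t ^ (1 - q - 1) = 1 := by
      rw [← rpow_add (hS t ht)]; norm_num
    have hIp : I t ^ (p - 1) * I t = I t ^ p := by
      rw [rpow_sub_one hI.ne', div_mul_cancel₀ _ hI.ne']
    have hrate := mul_le_mul_of_nonneg_left (h.rate_I_le_of_lt hβ hq hp hμ ht.1)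
      (by positivity : 0 ≤ K * p * I t ^ (p - 1))
    have hKI := mul_le_mul_of_nonneg_right hK (rpow_nonneg hI.le p)
    rw [← hIp] at hKI hrate ⊢
    linear_combination hKI + hrate + (β * (I t ^ (p - 1) * I t) * (1 - q)) * hSq

theorem lyapunov_le_of_pos (h : IsSISolution β μ p q S I) (hβ : 0 ≤ β) (hq : 0 ≤ q)
    (hq1 : q ≤ 1) (hp : 1 ≤ p) (hμ : β * S 0 ^ q * I 0 ^ (p - 1) < μ) {K : ℝ}
    (hK : (1 - q) * β ≤ K * (p * (μ - β * S 0 ^ q * I 0 ^ (p - 1)))) {b : ℝ} (hb : 0 ≤ b)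
    (hS : ∀ t ∈ Ioo 0 b, 0 < S t) : S 0 ^ (1 - q) - K * I 0 ^ p ≤ S b ^ (1 - q) := by
  have hψ := h.monotoneOn_lyapunov hβ hq hq1 hp hμ hK hS (left_mem_Icc.2 hb)
    (right_mem_Icc.2 hb) hb
  have hK0 : 0 ≤ K := (mul_nonneg_iff_of_pos_right (by nlinarith)).1
    ((mul_nonneg (sub_nonneg.2 hq1) hβ).trans hK)
  have := mul_nonneg hK0 (rpow_nonneg (h.I_pos b hb).le p)
  dsimp only at hψ
  linarith

/-- `S` cannot reach `0`: until it does, `lyapunov_le_of_pos` keeps `S ^ (1 - q)` above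
`S 0 ^ (1 - q) - K * I 0 ^ p > 0`. -/
theorem S_pos (h : IsSISolution β μ p q S I) (hβ : 0 ≤ β) (hq : 0 ≤ q) (hq1 : q < 1)
    (hp : 1 ≤ p) (hμ : β * S 0 ^ q * I 0 ^ (p - 1) < μ) {K : ℝ}
    (hK : (1 - q) * β ≤ K * (p * (μ - β * S 0 ^ q * I 0 ^ (p - 1))))
    (hKI : K * I 0 ^ p < S 0 ^ (1 - q)) (hS0 : 0 < S 0) {t : ℝ} (ht : 0 ≤ t) : 0 < S t := by
  refine neg_neg_iff_pos.1 <| lt_of_forall_Ico_lt (f := fun t => -S t) h.continuousOn_S.neg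
    (neg_neg_iff_pos.2 hS0) (fun b hb hpos => ?_) ht
  have hSb := h.lyapunov_le_of_pos hβ hq hq1.le hp hμ hK hb.le
    fun s hs => neg_neg_iff_pos.1 (hpos s ⟨hs.1.le, hs.2⟩)
  refine neg_neg_iff_pos.2 ((h.S_nonneg b hb.le).lt_of_ne fun hb0 => ?_)
  rw [← hb0, zero_rpow (by linarith)] at hSb
  linarith

theorem lyapunov_le (h : IsSISolution β μ p q S I) (hβ : 0 ≤ β) (hq : 0 ≤ q) (hq1 : q < 1)
    (hp : 1 ≤ p) (hμ : β * S 0 ^ q * I 0 ^ (p - 1) < μ) {K : ℝ}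
    (hK : (1 - q) * β ≤ K * (p * (μ - β * S 0 ^ q * I 0 ^ (p - 1))))
    (hKI : K * I 0 ^ p < S 0 ^ (1 - q)) (hS0 : 0 < S 0) {t : ℝ} (ht : 0 ≤ t) :
    S 0 ^ (1 - q) - K * I 0 ^ p ≤ S t ^ (1 - q) :=
  h.lyapunov_le_of_pos hβ hq hq1.le hp hμ hK ht
    fun _ hs => h.S_pos hβ hq hq1 hp hμ hK hKI hS0 hs.1.le

theorem exists_tendsto_S (h : IsSISolution β μ p q S I) (hβ : 0 ≤ β) (hq : 0 ≤ q) (hq1 : q < 1)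
    (hp : 1 ≤ p) (hμ : β * S 0 ^ q * I 0 ^ (p - 1) < μ) {K : ℝ}
    (hK : (1 - q) * β ≤ K * (p * (μ - β * S 0 ^ q * I 0 ^ (p - 1))))
    (hKI : K * I 0 ^ p < S 0 ^ (1 - q)) (hS0 : 0 < S 0) :
    ∃ L, 0 < L ∧ Tendsto S atTop (𝓝 L) := by
  obtain ⟨L, hL⟩ := exists_tendsto_of_antitoneOn_Ici (h.antitoneOn_S hβ)
    ⟨0, by rintro _ ⟨t, ht, rfl⟩; exact h.S_nonneg t ht⟩
  have hL0 : 0 ≤ L := ge_of_tendsto hL <|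
    (eventually_ge_atTop 0).mono fun t ht => h.S_nonneg t ht
  have hLq : S 0 ^ (1 - q) - K * I 0 ^ p ≤ L ^ (1 - q) :=
    ge_of_tendsto (hL.rpow_const (Or.inr (by linarith))) <|
      (eventually_ge_atTop 0).mono fun t ht => h.lyapunov_le hβ hq hq1 hp hμ hK hKI hS0 ht
  refine ⟨L, hL0.lt_of_ne fun hL0' => ?_, hL⟩
  rw [← hL0', zero_rpow (by linarith)] at hLq
  linarith

end IsSISolution

theorem stmt7_general (β μ p q S₀ I₀ : ℝ) (S I : ℝ → ℝ)
    (hβ : 0 < β) (hp : 1 ≤ p) (hq0 : 0 < q) (hq1 : q < 1)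
    (hS₀ : 0 < S₀) (hI₀ : 0 < I₀) (hS0 : S 0 = S₀) (hI0 : I 0 = I₀)
    (hScont : ContinuousOn S (Set.Ici 0)) (hIcont : ContinuousOn I (Set.Ici 0))
    (hSnonneg : ∀ t : ℝ, 0 ≤ t → 0 ≤ S t) (hIpos : ∀ t : ℝ, 0 ≤ t → 0 < I t)
    (hSode : ∀ t : ℝ, 0 < t → HasDerivAt S (-(β * S t ^ q * I t ^ p)) t)
    (hIode : ∀ t : ℝ, 0 < t → HasDerivAt I (β * S t ^ q * I t ^ p - μ * I t) t)
    (hgt : (1 - q) * β * I₀ ^ p < p * S₀ ^ (1 - q) * (μ - β * S₀ ^ q * I₀ ^ (p - 1))) :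
    Tendsto I atTop (𝓝 0) ∧ ∃ Sstar : ℝ, 0 < Sstar ∧ Tendsto S atTop (𝓝 Sstar) := by
  have h : IsSISolution β μ p q S I := ⟨hScont, hIcont, hSnonneg, hIpos, hSode, hIode⟩
  subst hS0 hI0
  set δ := μ - β * S 0 ^ q * I 0 ^ (p - 1)
  have hIp : 0 < I 0 ^ p := rpow_pos_of_pos hI₀ p
  have hδ : 0 < δ := by
    have : 0 < p * S 0 ^ (1 - q) := by positivity
    nlinarith [mul_pos (mul_pos (sub_pos.2 hq1) hβ) hIp]
  have hpδ : 0 < p * δ := by positivity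
  have hK : (1 - q) * β ≤ (1 - q) * β / (p * δ) * (p * δ) := (div_mul_cancel₀ _ hpδ.ne').ge
  have hKI : (1 - q) * β / (p * δ) * I 0 ^ p < S 0 ^ (1 - q) := by
    rw [div_mul_eq_mul_div, div_lt_iff₀ hpδ]
    linarith
  exact ⟨h.tendsto_I_zero hβ.le hq0.le hp (sub_pos.1 hδ),
    h.exists_tendsto_S hβ.le hq0.le hq1 hp (sub_pos.1 hδ) hK hKI hS₀⟩

/-- Proposition 8.1(ii) of the paper: for the SI ODE system
`S' = −β S^q I^p`, `I' = β S^q I^p − μ I` with `β, μ > 0`, `p ≥ 1`, `q ∈ (0,1)`,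
`S(0) = S₀ > 0`, `I(0) = I₀ > 0`, if `p·S₀^{1−q}·(μ − β·S₀^q·I₀^{p−1}) > (1−q)·β·I₀^p`,
then `I(t) → 0` and `S(t) → S*` as `t → ∞` for some constant `S* > 0`. -/
theorem stmt7 (β μ p q S₀ I₀ : ℝ) (S I : ℝ → ℝ)
    (hβ : 0 < β) (hμ : 0 < μ) (hp : 1 ≤ p) (hq0 : 0 < q) (hq1 : q < 1)
    (hS₀ : 0 < S₀) (hI₀ : 0 < I₀) (hS0 : S 0 = S₀) (hI0 : I 0 = I₀)
    (hScont : ContinuousOn S (Set.Ici 0)) (hIcont : ContinuousOn I (Set.Ici 0))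
    (hSnonneg : ∀ t : ℝ, 0 ≤ t → 0 ≤ S t) (hIpos : ∀ t : ℝ, 0 ≤ t → 0 < I t)
    (hSode : ∀ t : ℝ, 0 < t → HasDerivAt S (-(β * S t ^ q * I t ^ p)) t)
    (hIode : ∀ t : ℝ, 0 < t → HasDerivAt I (β * S t ^ q * I t ^ p - μ * I t) t)
    (hgt : (1 - q) * β * I₀ ^ p < p * S₀ ^ (1 - q) * (μ - β * S₀ ^ q * I₀ ^ (p - 1))) :
    Tendsto I atTop (𝓝 0) ∧ ∃ Sstar : ℝ, 0 < Sstar ∧ Tendsto S atTop (𝓝 Sstar) :=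
  stmt7_general β μ p q S₀ I₀ S I hβ hp hq0 hq1 hS₀ hI₀ hS0 hI0 hScont hIcont hSnonneg hIpos hSode
    hIode hgt
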